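/- The partial derivative operators on the double-graded quantum superplane satisfy the commutation rules, as ℂ-linear endomorphisms of A_q: ∂_x ∂_ξ = q ∂_ξ ∂_x; ∂_x ∂_θ = q ∂_θ ∂_x; ∂_x ∂_z = ∂_z ∂_x; ∂_ξ ∂_θ = ∂_θ ∂_ξ; ∂_ξ ∂_z = −q⁻¹ ∂_z ∂_ξ; ∂_θ ∂_z = −q⁻¹ ∂_z ∂_θ; ∂_ξ ∂_ξ = 0; ∂_θ ∂_θ = 0. -/

import Mathlib

/-!
STATEMENT 17: The partial derivative operators on the double-graded quantum superplane
(defined on the PBW basis `x^m ξ^α θ^β z^n` by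
`∂_x(x^m ξ^α θ^β z^n) = m x^{m−1} ξ^α θ^β z^n`,
`∂_ξ(x^m ξ^α θ^β z^n) = α q^m x^m θ^β z^n`,
`∂_θ(x^m ξ^α θ^β z^n) = β q^m x^m ξ^α z^n`,
`∂_z(x^m ξ^α θ^β z^n) = n (−q⁻¹)^{α+β} x^m ξ^α θ^β z^{n−1}`)
satisfy, as `ℂ`-linear endomorphisms of `A_q`:
`∂_x ∂_ξ = q ∂_ξ ∂_x`; `∂_x ∂_θ = q ∂_θ ∂_x`; `∂_x ∂_z = ∂_z ∂_x`; `∂_ξ ∂_θ = ∂_θ ∂_ξ`;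
`∂_ξ ∂_z = −q⁻¹ ∂_z ∂_ξ`; `∂_θ ∂_z = −q⁻¹ ∂_z ∂_θ`; `∂_ξ ∂_ξ = 0`; `∂_θ ∂_θ = 0`.
-/
open scoped TensorProduct

namespace DGQS

/-- The standard scalar product `⟨(a,b),(a',b')⟩ = aa' + bb'` on `ℤ₂ × ℤ₂`. -/
def pair2 (γ δ : ZMod 2 × ZMod 2) : ZMod 2 := γ.1 * δ.1 + γ.2 * δ.2

/-- The sign `(−1)^{⟨γ,δ⟩}`. -/
noncomputable def gsign (γ δ : ZMod 2 × ZMod 2) : ℂ := (-1 : ℂ) ^ (pair2 γ δ).val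

/-- The defining relations of the double-graded quantum superplane, imposed on the free
algebra on four generators `x = ι 0`, `ξ = ι 1`, `θ = ι 2`, `z = ι 3`:
`xξ = q ξx`, `xθ = q θx`, `xz = zx`, `ξ² = 0`, `θ² = 0`, `ξθ = θξ`,
`ξz = −q⁻¹ zξ`, `θz = −q⁻¹ zθ`. -/
inductive Rel (q : ℂ) : FreeAlgebra ℂ (Fin 4) → FreeAlgebra ℂ (Fin 4) → Prop
  | x_xi : Rel q (FreeAlgebra.ι ℂ (0 : Fin 4) * FreeAlgebra.ι ℂ (1 : Fin 4))
      (q • (FreeAlgebra.ι ℂ (1 : Fin 4) * FreeAlgebra.ι ℂ (0 : Fin 4)))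
  | x_th : Rel q (FreeAlgebra.ι ℂ (0 : Fin 4) * FreeAlgebra.ι ℂ (2 : Fin 4))
      (q • (FreeAlgebra.ι ℂ (2 : Fin 4) * FreeAlgebra.ι ℂ (0 : Fin 4)))
  | x_z : Rel q (FreeAlgebra.ι ℂ (0 : Fin 4) * FreeAlgebra.ι ℂ (3 : Fin 4))
      (FreeAlgebra.ι ℂ (3 : Fin 4) * FreeAlgebra.ι ℂ (0 : Fin 4))
  | xi_sq : Rel q (FreeAlgebra.ι ℂ (1 : Fin 4) * FreeAlgebra.ι ℂ (1 : Fin 4)) 0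
  | th_sq : Rel q (FreeAlgebra.ι ℂ (2 : Fin 4) * FreeAlgebra.ι ℂ (2 : Fin 4)) 0
  | xi_th : Rel q (FreeAlgebra.ι ℂ (1 : Fin 4) * FreeAlgebra.ι ℂ (2 : Fin 4))
      (FreeAlgebra.ι ℂ (2 : Fin 4) * FreeAlgebra.ι ℂ (1 : Fin 4))
  | xi_z : Rel q (FreeAlgebra.ι ℂ (1 : Fin 4) * FreeAlgebra.ι ℂ (3 : Fin 4))
      ((-q⁻¹) • (FreeAlgebra.ι ℂ (3 : Fin 4) * FreeAlgebra.ι ℂ (1 : Fin 4)))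
  | th_z : Rel q (FreeAlgebra.ι ℂ (2 : Fin 4) * FreeAlgebra.ι ℂ (3 : Fin 4))
      ((-q⁻¹) • (FreeAlgebra.ι ℂ (3 : Fin 4) * FreeAlgebra.ι ℂ (2 : Fin 4)))

/-- The algebra of polynomials on the double-graded quantum superplane `ℝ_q(1|𝟏)`. -/
abbrev Aq (q : ℂ) : Type := RingQuot (Rel q)

/-- The generators of `A_q`. -/
noncomputable def gen (q : ℂ) (i : Fin 4) : Aq q :=
  RingQuot.mkAlgHom ℂ (Rel q) (FreeAlgebra.ι ℂ i)

/-- The generator `x`, of degree `(0,0)`. -/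
noncomputable def X (q : ℂ) : Aq q := gen q 0
/-- The generator `ξ`, of degree `(0,1)`. -/
noncomputable def Xi (q : ℂ) : Aq q := gen q 1
/-- The generator `θ`, of degree `(1,0)`. -/
noncomputable def Th (q : ℂ) : Aq q := gen q 2
/-- The generator `z`, of degree `(1,1)`. -/
noncomputable def Zg (q : ℂ) : Aq q := gen q 3

/-- The `ℤ₂ × ℤ₂`-degrees of the generators. -/
def dg : Fin 4 → ZMod 2 × ZMod 2 := ![(0, 0), (0, 1), (1, 0), (1, 1)]

/-- The homogeneous component of degree `γ` of `A_q`: the span of the images of the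
words in the generators of total degree `γ`. -/
noncomputable def grading (q : ℂ) (γ : ZMod 2 × ZMod 2) : Submodule ℂ (Aq q) :=
  Submodule.span ℂ
    { a | ∃ w : List (Fin 4), (w.map dg).sum = γ ∧ a = (w.map (gen q)).prod }

end DGQS

/-! The ordered monomials `x^m ξ^α θ^β z^n` span `A_q`: multiplying one on the right by a
generator and using the relations to move that generator into place gives a scalar multiple of
another ordered monomial, or zero. So a linear map on `A_q` is determined by its values on
ordered monomials, and there each identity reduces to an identity between scalar coefficients. -/

theorem Submodule.span_eq_top_of_mul_mem {R A : Type*} [CommSemiring R] [Semiring A]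
    [Algebra R A] {s t : Set A} (hs : Algebra.adjoin R s = ⊤) (h1 : (1 : A) ∈ Submodule.span R t)
    (hmul : ∀ a ∈ t, ∀ g ∈ s, a * g ∈ Submodule.span R t) : Submodule.span R t = ⊤ := by
  have hclosed : ∀ g ∈ s,
      Submodule.span R t ≤ (Submodule.span R t).comap (LinearMap.mulRight R g) :=
    fun g hg => Submodule.span_le.2 fun a ha => hmul a ha g hg
  have hcl : Submonoid.closure s ≤ (Submodule.span R t : Set A) := fun x hx => by
    induction hx using Submonoid.closure_induction_right with
    | one => exact h1
    | mul_right x _ g hg ih => exact hclosed g hg ih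
  have hspan := Algebra.toSubmodule_eq_top.2 hs
  rw [Algebra.adjoin_eq_span] at hspan
  exact top_unique (hspan ▸ Submodule.span_le.2 hcl)

theorem pow_mul_eq_smul_mul_pow {R A : Type*} [CommSemiring R] [Semiring A] [Algebra R A]
    {a b : A} {c : R} (h : a * b = c • (b * a)) (n : ℕ) : a ^ n * b = c ^ n • (b * a ^ n) := by
  induction n with
  | zero => simp
  | succ n ih =>
    rw [pow_succ, mul_assoc, h, mul_smul_comm, ← mul_assoc, ih, smul_mul_assoc, smul_smul,
      mul_assoc, ← pow_succ', pow_succ]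

namespace DGQS

variable {q : ℂ}

theorem adjoin_range_gen : Algebra.adjoin ℂ (Set.range (gen q)) = ⊤ := by
  rw [show Set.range (gen q) = RingQuot.mkAlgHom ℂ (Rel q) '' Set.range (FreeAlgebra.ι ℂ) by
      rw [← Set.range_comp]; rfl,
    Algebra.adjoin_image, FreeAlgebra.adjoin_range_ι, Algebra.map_top,
    (AlgHom.range_eq_top _).2 (RingQuot.mkAlgHom_surjective ℂ (Rel q))]

theorem commute_X_Zg : Commute (X q) (Zg q) := by
  show X q * Zg q = Zg q * X q
  simpa [X, Zg, gen] using RingQuot.mkAlgHom_rel ℂ (Rel.x_z (q := q))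

theorem Xi_mul_X (hq : q ≠ 0) : Xi q * X q = q⁻¹ • (X q * Xi q) := by
  have := RingQuot.mkAlgHom_rel ℂ (Rel.x_xi (q := q))
  simp only [map_mul, map_smul] at this
  simp [X, Xi, gen, this, smul_smul, hq]

theorem Th_mul_X (hq : q ≠ 0) : Th q * X q = q⁻¹ • (X q * Th q) := by
  have := RingQuot.mkAlgHom_rel ℂ (Rel.x_th (q := q))
  simp only [map_mul, map_smul] at this
  simp [X, Th, gen, this, smul_smul, hq]

theorem commute_Xi_Th : Commute (Xi q) (Th q) := by
  show Xi q * Th q = Th q * Xi q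
  simpa [Xi, Th, gen] using RingQuot.mkAlgHom_rel ℂ (Rel.xi_th (q := q))

theorem Zg_mul_Xi (hq : q ≠ 0) : Zg q * Xi q = (-q) • (Xi q * Zg q) := by
  have := RingQuot.mkAlgHom_rel ℂ (Rel.xi_z (q := q))
  simp only [map_mul, map_smul] at this
  simp [Xi, Zg, gen, this, smul_smul, hq]

theorem Zg_mul_Th (hq : q ≠ 0) : Zg q * Th q = (-q) • (Th q * Zg q) := by
  have := RingQuot.mkAlgHom_rel ℂ (Rel.th_z (q := q))
  simp only [map_mul, map_smul] at this
  simp [Th, Zg, gen, this, smul_smul, hq]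

theorem Xi_mul_Xi : Xi q * Xi q = 0 := by
  simpa [Xi, gen] using RingQuot.mkAlgHom_rel ℂ (Rel.xi_sq (q := q))

theorem Th_mul_Th : Th q * Th q = 0 := by
  simpa [Th, gen] using RingQuot.mkAlgHom_rel ℂ (Rel.th_sq (q := q))

noncomputable def monomial (q : ℂ) (m : ℕ) (α β : Bool) (n : ℕ) : Aq q :=
  X q ^ m * Xi q ^ α.toNat * Th q ^ β.toNat * Zg q ^ n

def monomials (q : ℂ) : Set (Aq q) := {a | ∃ m α β n, monomial q m α β n = a}

theorem monomial_mul_X (hq : q ≠ 0) (m : ℕ) (α β : Bool) (n : ℕ) :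
    monomial q m α β n * X q = q⁻¹ ^ (α.toNat + β.toNat) • monomial q (m + 1) α β n := by
  calc monomial q m α β n * X q
      = X q ^ m * Xi q ^ α.toNat * Th q ^ β.toNat * (Zg q ^ n * X q) := by
        simp only [monomial, mul_assoc]
    _ = X q ^ m * Xi q ^ α.toNat * (Th q ^ β.toNat * X q) * Zg q ^ n := by
        rw [← (commute_X_Zg.pow_right n).eq]; simp only [mul_assoc]
    _ = q⁻¹ ^ β.toNat • (X q ^ m * (Xi q ^ α.toNat * X q) * Th q ^ β.toNat * Zg q ^ n) := by
        rw [pow_mul_eq_smul_mul_pow (Th_mul_X hq)]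
        simp only [mul_assoc, mul_smul_comm, smul_mul_assoc]
    _ = q⁻¹ ^ (α.toNat + β.toNat) • monomial q (m + 1) α β n := by
        rw [pow_mul_eq_smul_mul_pow (Xi_mul_X hq)]
        simp only [monomial, mul_assoc, mul_smul_comm, smul_mul_assoc, smul_smul, pow_succ,
          pow_add, mul_comm]

theorem monomial_mul_Zg (m : ℕ) (α β : Bool) (n : ℕ) :
    monomial q m α β n * Zg q = monomial q m α β (n + 1) := by
  rw [monomial, monomial, mul_assoc, ← pow_succ]

theorem monomial_mul_Xi (hq : q ≠ 0) (m : ℕ) (α β : Bool) (n : ℕ) :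
    monomial q m α β n * Xi q = if α then 0 else (-q) ^ n • monomial q m true β n := by
  calc monomial q m α β n * Xi q
      = X q ^ m * Xi q ^ α.toNat * Th q ^ β.toNat * (Zg q ^ n * Xi q) := by
        simp only [monomial, mul_assoc]
    _ = (-q) ^ n • (X q ^ m * (Xi q ^ α.toNat * Xi q) * Th q ^ β.toNat * Zg q ^ n) := by
        rw [pow_mul_eq_smul_mul_pow (Zg_mul_Xi hq), mul_smul_comm, ← mul_assoc,
          mul_assoc _ (Th q ^ _), ← (commute_Xi_Th.pow_right _).eq]
        simp only [mul_assoc]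
    _ = _ := by cases α <;> simp [monomial, Xi_mul_Xi]

theorem monomial_mul_Th (hq : q ≠ 0) (m : ℕ) (α β : Bool) (n : ℕ) :
    monomial q m α β n * Th q = if β then 0 else (-q) ^ n • monomial q m α true n := by
  calc monomial q m α β n * Th q
      = X q ^ m * Xi q ^ α.toNat * Th q ^ β.toNat * (Zg q ^ n * Th q) := by
        simp only [monomial, mul_assoc]
    _ = (-q) ^ n • (X q ^ m * Xi q ^ α.toNat * (Th q ^ β.toNat * Th q) * Zg q ^ n) := by
        rw [pow_mul_eq_smul_mul_pow (Zg_mul_Th hq), mul_smul_comm]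
        simp only [mul_assoc]
    _ = _ := by cases β <;> simp [monomial, Th_mul_Th]

theorem span_monomials (hq : q ≠ 0) : Submodule.span ℂ (monomials q) = ⊤ := by
  refine Submodule.span_eq_top_of_mul_mem adjoin_range_gen
    (Submodule.subset_span ⟨0, false, false, 0, by simp [monomial]⟩) ?_
  have mem (m α β n) : monomial q m α β n ∈ Submodule.span ℂ (monomials q) :=
    Submodule.subset_span ⟨m, α, β, n, rfl⟩
  rintro _ ⟨m, α, β, n, rfl⟩ _ ⟨i, rfl⟩
  fin_cases i
  · show monomial q m α β n * X q ∈ _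
    rw [monomial_mul_X hq]
    exact Submodule.smul_mem _ _ (mem _ _ _ _)
  · show monomial q m α β n * Xi q ∈ _
    rw [monomial_mul_Xi hq]
    split_ifs
    exacts [zero_mem _, Submodule.smul_mem _ _ (mem _ _ _ _)]
  · show monomial q m α β n * Th q ∈ _
    rw [monomial_mul_Th hq]
    split_ifs
    exacts [zero_mem _, Submodule.smul_mem _ _ (mem _ _ _ _)]
  · show monomial q m α β n * Zg q ∈ _
    rw [monomial_mul_Zg]
    exact mem _ _ _ _

theorem linearMap_ext {M : Type*} [AddCommMonoid M] [Module ℂ M] (hq : q ≠ 0)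
    {f g : Aq q →ₗ[ℂ] M} (h : ∀ m α β n, f (monomial q m α β n) = g (monomial q m α β n)) :
    f = g :=
  LinearMap.ext_on (span_monomials hq) (by rintro _ ⟨m, α, β, n, rfl⟩; exact h m α β n)

end DGQS

open DGQS in
theorem statement17_general (q : ℂ) (hq : q ≠ 0)
    (Dx Dξ Dθ Dz : Aq q →ₗ[ℂ] Aq q)
    (hDx : ∀ (m n : ℕ) (α β : Bool),
      Dx (X q ^ m * Xi q ^ α.toNat * Th q ^ β.toNat * Zg q ^ n)
        = (m : ℂ) • (X q ^ (m - 1) * Xi q ^ α.toNat * Th q ^ β.toNat * Zg q ^ n))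
    (hDξ : ∀ (m n : ℕ) (α β : Bool),
      Dξ (X q ^ m * Xi q ^ α.toNat * Th q ^ β.toNat * Zg q ^ n)
        = ((α.toNat : ℂ) * q ^ m) • (X q ^ m * Th q ^ β.toNat * Zg q ^ n))
    (hDθ : ∀ (m n : ℕ) (α β : Bool),
      Dθ (X q ^ m * Xi q ^ α.toNat * Th q ^ β.toNat * Zg q ^ n)
        = ((β.toNat : ℂ) * q ^ m) • (X q ^ m * Xi q ^ α.toNat * Zg q ^ n))
    (hDz : ∀ (m n : ℕ) (α β : Bool),
      Dz (X q ^ m * Xi q ^ α.toNat * Th q ^ β.toNat * Zg q ^ n)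
        = ((n : ℂ) * (-q⁻¹) ^ (α.toNat + β.toNat)) •
            (X q ^ m * Xi q ^ α.toNat * Th q ^ β.toNat * Zg q ^ (n - 1))) :
    Dx ∘ₗ Dξ = q • (Dξ ∘ₗ Dx) ∧
    Dx ∘ₗ Dθ = q • (Dθ ∘ₗ Dx) ∧
    Dx ∘ₗ Dz = Dz ∘ₗ Dx ∧
    Dξ ∘ₗ Dθ = Dθ ∘ₗ Dξ ∧
    Dξ ∘ₗ Dz = (-q⁻¹) • (Dz ∘ₗ Dξ) ∧
    Dθ ∘ₗ Dz = (-q⁻¹) • (Dz ∘ₗ Dθ) ∧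
    Dξ ∘ₗ Dξ = 0 ∧
    Dθ ∘ₗ Dθ = 0 := by
  have hx (m α β n) : Dx (monomial q m α β n) = (m : ℂ) • monomial q (m - 1) α β n :=
    hDx m n α β
  have hξ (m α β n) :
      Dξ (monomial q m α β n) = ((α.toNat : ℂ) * q ^ m) • monomial q m false β n := by
    simpa [monomial] using hDξ m n α β
  have hθ (m α β n) :
      Dθ (monomial q m α β n) = ((β.toNat : ℂ) * q ^ m) • monomial q m α false n := by
    simpa [monomial] using hDθ m n α β
  have hz (m α β n) : Dz (monomial q m α β n)
      = ((n : ℂ) * (-q⁻¹) ^ (α.toNat + β.toNat)) • monomial q m α β (n - 1) :=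
    hDz m n α β
  refine ⟨?_, ?_, ?_, ?_, ?_, ?_, ?_, ?_⟩ <;> refine linearMap_ext hq fun m α β n => ?_ <;>
    simp only [LinearMap.comp_apply, LinearMap.smul_apply, LinearMap.zero_apply, hx, hξ, hθ, hz,
      map_smul, smul_smul, Bool.toNat_false, Nat.cast_zero, zero_mul, zero_smul, smul_zero] <;>
    congr 1
  · rcases m with _ | m
    · simp
    · simp only [Nat.add_sub_cancel]; push_cast; ring
  · rcases m with _ | m
    · simp
    · simp only [Nat.add_sub_cancel]; push_cast; ring
  · ring
  · ring
  · cases α <;> simp; ring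
  · cases β <;> simp; ring

open DGQS in
theorem statement17 (q : ℂ) (hq : q ≠ 0) (hqroot : ∀ n : ℕ, 0 < n → q ^ n ≠ 1)
    (Dx Dξ Dθ Dz : Aq q →ₗ[ℂ] Aq q)
    (hDx : ∀ (m n : ℕ) (α β : Bool),
      Dx (X q ^ m * Xi q ^ α.toNat * Th q ^ β.toNat * Zg q ^ n)
        = (m : ℂ) • (X q ^ (m - 1) * Xi q ^ α.toNat * Th q ^ β.toNat * Zg q ^ n))
    (hDξ : ∀ (m n : ℕ) (α β : Bool),
      Dξ (X q ^ m * Xi q ^ α.toNat * Th q ^ β.toNat * Zg q ^ n)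
        = ((α.toNat : ℂ) * q ^ m) • (X q ^ m * Th q ^ β.toNat * Zg q ^ n))
    (hDθ : ∀ (m n : ℕ) (α β : Bool),
      Dθ (X q ^ m * Xi q ^ α.toNat * Th q ^ β.toNat * Zg q ^ n)
        = ((β.toNat : ℂ) * q ^ m) • (X q ^ m * Xi q ^ α.toNat * Zg q ^ n))
    (hDz : ∀ (m n : ℕ) (α β : Bool),
      Dz (X q ^ m * Xi q ^ α.toNat * Th q ^ β.toNat * Zg q ^ n)
        = ((n : ℂ) * (-q⁻¹) ^ (α.toNat + β.toNat)) •
            (X q ^ m * Xi q ^ α.toNat * Th q ^ β.toNat * Zg q ^ (n - 1))) :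
    Dx ∘ₗ Dξ = q • (Dξ ∘ₗ Dx) ∧
    Dx ∘ₗ Dθ = q • (Dθ ∘ₗ Dx) ∧
    Dx ∘ₗ Dz = Dz ∘ₗ Dx ∧
    Dξ ∘ₗ Dθ = Dθ ∘ₗ Dξ ∧
    Dξ ∘ₗ Dz = (-q⁻¹) • (Dz ∘ₗ Dξ) ∧
    Dθ ∘ₗ Dz = (-q⁻¹) • (Dz ∘ₗ Dθ) ∧
    Dξ ∘ₗ Dξ = 0 ∧
    Dθ ∘ₗ Dθ = 0 :=
  statement17_general q hq Dx Dξ Dθ Dz hDx hDξ hDθ hDz
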